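/- arXiv:math/0108045 — 2 statements merged into one kernel-verified Lean document; each statement's English description precedes it below -/
import Mathlib

section
/- Let m, n, k, q, j, k₁ be positive integers with n ≤ m, 0 ≤ j ≤ m−1, n·(n+m)·k = q·k₁, and k₁·j ≡ n (mod m). If q² ≥ n·(m+n)·j·(m−j)·k² + 2·n·k·j·q, then k₁ = 1 (and hence q = n·(n+m)·k and j = n mod m). -/
set_option maxHeartbeats 1000000

/-- Key arithmetic step in Lemma 4.3: if `n ≤ m`, `1 ≤ j ≤ m−1`,
`n(n+m)k = q·k₁`, `k₁·j ≡ n (mod m)`, and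
`q² ≥ n(m+n)j(m−j)k² + 2nkjq`, then `k₁ = 1`
(hence `q = n(n+m)k` and `j ≡ n (mod m)`). -/
theorem lemma43_key (m n k q j k₁ : ℕ)
    (hm : 0 < m) (hn : 0 < n) (hk : 0 < k) (hq : 0 < q) (hk₁ : 0 < k₁)
    (hnm : n ≤ m) (hj1 : 1 ≤ j) (hj2 : j ≤ m - 1)
    (hdiv : n * (n + m) * k = q * k₁)
    (hcong : k₁ * j ≡ n [MOD m])
    (hineq : q ^ 2 ≥ n * (m + n) * j * (m - j) * k ^ 2 + 2 * n * k * j * q) :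
    k₁ = 1 ∧ q = n * (n + m) * k ∧ j ≡ n [MOD m] := by
  have hjm : j < m := lt_of_le_of_lt hj2 (Nat.sub_lt hm one_pos)
  have hdivZ : (n : ℤ) * (n + m) * k = q * k₁ := by exact_mod_cast hdiv
  have hineqZ : (n : ℤ) * (m + n) * j * ((m : ℤ) - j) * k ^ 2 + 2 * n * k * j * q ≤ (q : ℤ) ^ 2 := by
    zify [hjm.le] at hineq
    linarith
  have hmZ : (0 : ℤ) < m := by exact_mod_cast hm
  have hnZ : (0 : ℤ) < n := by exact_mod_cast hn
  have hkZ : (0 : ℤ) < k := by exact_mod_cast hk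
  have hk₁Z : (1 : ℤ) ≤ k₁ := by exact_mod_cast hk₁
  have hj1Z : (1 : ℤ) ≤ j := by exact_mod_cast hj1
  have hnmZ : (n : ℤ) ≤ m := by exact_mod_cast hnm
  set T : ℤ := (k₁ : ℤ) * j with hT
  have h5 : (0 : ℤ) ≤ (k₁:ℤ)^2 * ((q:ℤ)^2 - 2*n*k*j*q) - (n:ℤ)*(m+n)*j*((m:ℤ)-j)*k^2*(k₁:ℤ)^2 := by
    nlinarith [mul_le_mul_of_nonneg_left (sub_nonneg.2 hineqZ) (sq_nonneg (k₁:ℤ))]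
  have h2 : (k:ℤ)^2 * n * (n + m) * (T^2 - (2*n + k₁*m)*T + n*(m+n))
      = (k₁:ℤ)^2 * ((q:ℤ)^2 - 2*n*k*j*q) - (n:ℤ)*(m+n)*j*((m:ℤ)-j)*k^2*(k₁:ℤ)^2 := by
    linear_combination ((q:ℤ)*k₁ + (n:ℤ)*((n:ℤ)+m)*k - 2*(n:ℤ)*k*j*k₁) * hdivZ
  have hpos : (0 : ℤ) < (k:ℤ)^2 * n * (n + m) := by positivity
  have hf : (0 : ℤ) ≤ T^2 - (2*n + k₁*m)*T + n*(m+n) := by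
    by_contra hc
    push_neg at hc
    have := mul_neg_of_pos_of_neg hpos hc
    linarith [h2 ▸ h5]
  -- congruence: k₁*j = n or k₁*j ≥ n + m
  have hTcase : k₁ * j = n ∨ n + m ≤ k₁ * j := by
    have hkj1 : 1 ≤ k₁ * j := Nat.one_le_iff_ne_zero.mpr (by positivity)
    rcases le_or_gt (k₁ * j) n with h | h
    · left
      have hd : m ∣ n - k₁ * j := (Nat.modEq_iff_dvd' h).mp hcong
      have h0 := Nat.eq_zero_of_dvd_of_lt hd (by omega)
      omega
    · right
      have hd : m ∣ k₁ * j - n := (Nat.modEq_iff_dvd' h.le).mp hcong.symm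
      have := Nat.le_of_dvd (by omega) hd
      omega
  have hk1 : k₁ = 1 := by
    rcases hTcase with hTn | hTbig
    · have hTnZ : T = (n : ℤ) := by rw [hT]; exact_mod_cast hTn
      rw [hTnZ] at hf
      have hfn : (0:ℤ) ≤ (n:ℤ)*m*(1-(k₁:ℤ)) := by
        have e : (n:ℤ)^2 - (2*(n:ℤ) + (k₁:ℤ)*m)*(n:ℤ) + (n:ℤ)*((m:ℤ)+n) = (n:ℤ)*m*(1-(k₁:ℤ)) := by ring
        linarith [e ▸ hf]
      have : (k₁ : ℤ) ≤ 1 := by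
        by_contra hc
        push_neg at hc
        have h1 : 1 - (k₁:ℤ) ≤ -1 := by linarith
        have h2' := mul_le_mul_of_nonneg_left h1 (le_of_lt (mul_pos hnZ hmZ))
        nlinarith [mul_pos hnZ hmZ]
      omega
    · exfalso
      have hT1 : (n : ℤ) + m ≤ T := by rw [hT]; exact_mod_cast hTbig
      have hT2 : T ≤ (k₁ : ℤ) * m - k₁ := by
        rw [hT]
        have hj' : (j : ℤ) ≤ (m : ℤ) - 1 := by
          have : (j:ℤ) < m := by exact_mod_cast hjm
          linarith
        nlinarith [mul_le_mul_of_nonneg_left hj' (by linarith : (0:ℤ) ≤ (k₁:ℤ))]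
      rcases le_or_gt (k₁ : ℤ) 1 with hle | hgt
      · have h1 : (k₁ : ℤ) = 1 := le_antisymm hle hk₁Z
        rw [h1] at hT2
        linarith
      · have hk2 : (2 : ℤ) ≤ k₁ := hgt
        clear h2 h5 hineqZ hdivZ hineq hdiv hcong hpos
        set A : ℤ := (n:ℤ) + m with hA
        set B : ℤ := (k₁:ℤ) * m with hB
        have hFT := hf
        have hid : (B - A) * (T^2 - (2*n + k₁*m)*T + n*(m+n))
            = (B - T) * (A^2 - (2*n + k₁*m)*A + n*(m+n))
              + (T - A) * (B^2 - (2*n + k₁*m)*B + n*(m+n))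
              - (B - T) * (T - A) * (B - A) := by rw [hA, hB]; ring
        have h2m : 2 * (m:ℤ) ≤ (k₁:ℤ) * m := by
          have := mul_le_mul_of_nonneg_right hk2 hmZ.le
          linarith
        have hba : (0 : ℤ) ≤ B - A := by rw [hA, hB]; linarith
        have hbT : (k₁ : ℤ) ≤ B - T := by rw [hB]; linarith
        have hbT0 : (0 : ℤ) ≤ B - T := by linarith
        have hTa : (0 : ℤ) ≤ T - A := by rw [hA]; linarith
        have hApos : (0 : ℤ) < A := by rw [hA]; linarith
        have hAm : (0 : ℤ) < A * m := mul_pos hApos hmZ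
        have hfa_neg : A^2 - (2*n + k₁*m)*A + n*(m+n) ≤ -(A * m) := by
          have e : A^2 - (2*(n:ℤ) + (k₁:ℤ)*m)*A + (n:ℤ)*((m:ℤ)+n) = A * m * (1 - (k₁:ℤ)) := by
            rw [hA]; ring
          have h1 : (1 : ℤ) - k₁ ≤ -1 := by linarith
          have := mul_le_mul_of_nonneg_left h1 hAm.le
          rw [e]; linarith
        have hfb_np : B^2 - (2*n + k₁*m)*B + n*(m+n) ≤ 0 := by
          have e : B^2 - (2*(n:ℤ) + (k₁:ℤ)*m)*B + (n:ℤ)*((m:ℤ)+n) = (n:ℤ) * ((m:ℤ) + n - 2*(k₁:ℤ)*m) := by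
            rw [hB]; ring
          have h1 : (m:ℤ) + n - 2*(k₁:ℤ)*m ≤ 0 := by linarith
          rw [e]
          exact mul_nonpos_of_nonneg_of_nonpos hnZ.le h1
        have h6 : (B - T) * (A^2 - (2*n + k₁*m)*A + n*(m+n)) ≤ -((k₁:ℤ) * (A * m)) := by
          have s1 : (B - T) * (A^2 - (2*n + k₁*m)*A + n*(m+n)) ≤ (B - T) * (-(A * m)) :=
            mul_le_mul_of_nonneg_left hfa_neg hbT0
          have s2 : (k₁:ℤ) * (A * m) ≤ (B - T) * (A * m) :=
            mul_le_mul_of_nonneg_right hbT hAm.le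
          have e : (B - T) * (-(A * m)) = -((B - T) * (A * m)) := by ring
          linarith [e ▸ s1]
        have h7 : (T - A) * (B^2 - (2*n + k₁*m)*B + n*(m+n)) ≤ 0 := mul_nonpos_of_nonneg_of_nonpos hTa hfb_np
        have h8 : (0 : ℤ) ≤ (B - T) * (T - A) * (B - A) :=
          mul_nonneg (mul_nonneg hbT0 hTa) hba
        have h9 : (0 : ℤ) ≤ (B - A) * (T^2 - (2*n + k₁*m)*T + n*(m+n)) := mul_nonneg hba hFT
        have h10 : (0 : ℤ) < (k₁:ℤ) * (A * m) := by positivity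
        linarith [hid]
  subst hk1
  exact ⟨rfl, by simpa using hdiv.symm, by simpa using hcong⟩
end

section
/- Let m, n, j be positive integers with n ≤ m and 0 ≤ j ≤ m−1, and let k₁ ≥ 1 be an integer. If n·(m+n)/k₁ ≥ n·j + √(n·j·m·(m+n−j)) (as real numbers), then j ≤ n/k₁ + m/2 − √(m²/4 + n·m·(k₁−1)/k₁²), and consequently k₁·j ≤ n, with k₁·j = n only if k₁ = 1. -/
set_option maxHeartbeats 1000000

/-- Inequality chain in the proof of Lemma 4.3: if
`n(m+n)/k₁ ≥ nj + √(njm(m+n−j))` as real numbers (with `n ≤ m`, `1 ≤ j ≤ m−1`,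
`k₁ ≥ 1`), then `j ≤ n/k₁ + m/2 − √(m²/4 + nm(k₁−1)/k₁²)`, hence `k₁·j ≤ n`,
with `k₁·j = n` only if `k₁ = 1`. -/
theorem lemma43_ineq_chain (m n j k₁ : ℕ)
    (hm : 0 < m) (hn : 0 < n) (hj : 0 < j) (hk₁ : 1 ≤ k₁)
    (hnm : n ≤ m) (hjm : j ≤ m - 1)
    (h : (n : ℝ) * (m + n) / k₁ ≥ (n : ℝ) * j +
      Real.sqrt ((n : ℝ) * j * m * ((m : ℝ) + n - j))) :
    (j : ℝ) ≤ (n : ℝ) / k₁ + (m : ℝ) / 2 -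
        Real.sqrt ((m : ℝ) ^ 2 / 4 + (n : ℝ) * m * ((k₁ : ℝ) - 1) / (k₁ : ℝ) ^ 2) ∧
      k₁ * j ≤ n ∧ (k₁ * j = n → k₁ = 1) := by
  have hK1 : (1:ℝ) ≤ (k₁:ℝ) := by exact_mod_cast hk₁
  have hK0 : (0:ℝ) < (k₁:ℝ) := by linarith
  have hKne : (k₁:ℝ) ≠ 0 := ne_of_gt hK0
  have hN0 : (0:ℝ) < n := by exact_mod_cast hn
  have hM0 : (0:ℝ) < m := by exact_mod_cast hm
  have hJ0 : (0:ℝ) < j := by exact_mod_cast hj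
  have hNM : (n:ℝ) ≤ m := by exact_mod_cast hnm
  have hMj : (j:ℝ) ≤ (m:ℝ) - 1 := by
    have : (j:ℝ) ≤ ((m-1 : ℕ):ℝ) := by exact_mod_cast hjm
    rwa [Nat.cast_sub hm, Nat.cast_one] at this
  have hs0 : (0:ℝ) ≤ (n:ℝ) * j * m * ((m:ℝ) + n - j) := by
    have h' : (0:ℝ) < (m:ℝ) + n - j := by linarith
    have := mul_pos (mul_pos (mul_pos hN0 hJ0) hM0) h'
    linarith
  have h1 : Real.sqrt ((n:ℝ)*j*m*((m:ℝ)+n-j)) ≤ (n:ℝ)*((m:ℝ)+n)/k₁ - n*j := by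
    have := h; linarith [h]
  have h2 : (0:ℝ) ≤ (n:ℝ)*((m:ℝ)+n)/k₁ - n*j := le_trans (Real.sqrt_nonneg _) h1
  have h3 : (n:ℝ)*j*m*((m:ℝ)+n-j) ≤ ((n:ℝ)*((m:ℝ)+n)/k₁ - n*j)^2 := by
    nlinarith [Real.sq_sqrt hs0, Real.sqrt_nonneg ((n:ℝ)*j*m*((m:ℝ)+n-j))]
  -- cleared quadratic inequality: j²K² - j(mK² + 2nK) + n(m+n) ≥ 0
  have h4 : 0 ≤ (j:ℝ)^2 * k₁^2 - (j:ℝ)*((m:ℝ)*k₁^2 + 2*n*k₁) + n*((m:ℝ)+n) := by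
    have h3' : (n:ℝ)*j*m*((m:ℝ)+n-j) * k₁^2 ≤ ((n:ℝ)*((m:ℝ)+n) - n*j*k₁)^2 := by
      have : ((n:ℝ)*((m:ℝ)+n)/k₁ - n*j)^2 * k₁^2 = ((n:ℝ)*((m:ℝ)+n) - n*j*k₁)^2 := by
        field_simp
      nlinarith [h3, sq_nonneg ((k₁:ℝ)), mul_le_mul_of_nonneg_right h3 (le_of_lt (pow_pos hK0 2))]
    nlinarith [h3', mul_pos hN0 (show (0:ℝ) < (m:ℝ)+n by linarith)]
  set I : ℝ := (m:ℝ)^2/4 + (n:ℝ)*m*((k₁:ℝ)-1)/(k₁:ℝ)^2 with hI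
  have hI0 : (m:ℝ)^2/4 ≤ I := by
    have : 0 ≤ (n:ℝ)*m*((k₁:ℝ)-1)/(k₁:ℝ)^2 :=
      div_nonneg (mul_nonneg (mul_nonneg hN0.le hM0.le) (by linarith)) (sq_nonneg _)
    linarith
  set S : ℝ := Real.sqrt I with hSdef
  have hS0 : 0 ≤ S := Real.sqrt_nonneg _
  have hImm : Real.sqrt ((m:ℝ)^2/4) = (m:ℝ)/2 := by
    rw [show ((m:ℝ)^2/4) = ((m:ℝ)/2)^2 by ring, Real.sqrt_sq (by positivity)]
  have hS2 : S^2 = I := Real.sq_sqrt (le_trans (by positivity : (0:ℝ) ≤ (m:ℝ)^2/4) hI0)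
  have hSm : (m:ℝ)/2 ≤ S := by
    have := Real.sqrt_le_sqrt hI0
    rwa [hImm] at this
  -- (j - a)^2 ≥ S^2 where a = n/K + m/2
  have h5 : S^2 ≤ ((j:ℝ) - ((n:ℝ)/k₁ + (m:ℝ)/2))^2 := by
    rw [hS2, hI]
    have key : (((j:ℝ) - ((n:ℝ)/k₁ + (m:ℝ)/2))^2 - ((m:ℝ)^2/4 + (n:ℝ)*m*((k₁:ℝ)-1)/(k₁:ℝ)^2)) * k₁^2
        = (j:ℝ)^2 * k₁^2 - (j:ℝ)*((m:ℝ)*k₁^2 + 2*n*k₁) + n*((m:ℝ)+n) := by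
      field_simp; ring
    nlinarith [h4, pow_pos hK0 2]
  have hja : (j:ℝ) < (n:ℝ)/k₁ + (m:ℝ)/2 + S := by
    have hnk : 0 < (n:ℝ)/k₁ := by positivity
    linarith
  have goal1 : (j:ℝ) ≤ (n:ℝ)/k₁ + (m:ℝ)/2 - S := by
    by_contra hcon
    push_neg at hcon
    nlinarith [mul_pos (by linarith : (0:ℝ) < (j:ℝ) - ((n:ℝ)/k₁ + (m:ℝ)/2) + S)
      (by linarith : (0:ℝ) < (n:ℝ)/k₁ + (m:ℝ)/2 + S - j)]
  have goal2r : (k₁:ℝ) * j ≤ n := by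
    have : (j:ℝ) ≤ (n:ℝ)/k₁ := by linarith
    calc (k₁:ℝ) * j ≤ (k₁:ℝ) * ((n:ℝ)/k₁) := by nlinarith
    _ = n := by field_simp
  refine ⟨goal1, by exact_mod_cast goal2r, ?_⟩
  intro heq
  by_contra hk1
  have hk2 : 2 ≤ k₁ := by omega
  have hK2 : (2:ℝ) ≤ (k₁:ℝ) := by exact_mod_cast hk2
  have hSm' : (m:ℝ)/2 < S := by
    have : 0 < (n:ℝ)*m*((k₁:ℝ)-1)/(k₁:ℝ)^2 :=
      div_pos (mul_pos (mul_pos hN0 hM0) (by linarith)) (pow_pos hK0 2)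
    have hlt : (m:ℝ)^2/4 < I := by rw [hI]; linarith
    have := Real.sqrt_lt_sqrt (by positivity) hlt
    rwa [hImm] at this
  have : (j:ℝ) < (n:ℝ)/k₁ := by linarith
  have hlt : (k₁:ℝ) * j < n := by
    rw [mul_comm]
    exact (lt_div_iff₀ hK0).mp this
  have heqr : (k₁:ℝ) * j = n := by exact_mod_cast heq
  linarith
end
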